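/- Let d ≥ 2 and on (ℂ^d)^{⊗3} let H = S_{12} + S_{13}. If t ∈ ℝ satisfies e^{3it} = 1 (i.e., t = 2mπ/3 for some integer m), then for every ψ ∈ ℂ^d, e^{−itH}(ψ⊗|0⟩⊗|0⟩) = e^{−2it}·(ψ⊗|0⟩⊗|0⟩): the evolution acts as a global phase on all such initial states. Consequently at these times the state of each observer's memory is independent of ψ and the procedure is not a measurement. -/

import Mathlib

open Matrix Kronecker
open scoped ComplexOrder

noncomputable section

abbrev Mat (n : ℕ) := Matrix (Fin n) (Fin n) ℂ

/-- A density matrix: positive semidefinite with trace 1. -/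
def IsDensity {n : Type*} [Fintype n] (ρ : Matrix n n ℂ) : Prop :=
  ρ.PosSemidef ∧ ρ.trace = 1

/-- The rank-one projector `|ψ⟩⟨ψ|`. -/
def proj {n : Type*} (ψ : n → ℂ) : Matrix n n ℂ :=
  Matrix.of fun i j => ψ i * star (ψ j)

/-- Partial trace over the first tensor factor. -/
def trFst {a b : Type*} [Fintype a] (X : Matrix (a × b) (a × b) ℂ) : Matrix b b ℂ :=
  Matrix.of fun j l => ∑ i : a, X (i, j) (i, l)

/-- Partial trace over the second tensor factor. -/
def trSnd {a b : Type*} [Fintype b] (X : Matrix (a × b) (a × b) ℂ) : Matrix a a ℂ :=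
  Matrix.of fun i k => ∑ j : b, X (i, j) (k, j)

/-- `id ⊗ Φ` acting on matrices over a product index type. -/
def idTensor {k d m : Type*} (Φ : Matrix d d ℂ → Matrix m m ℂ)
    (X : Matrix (k × d) (k × d) ℂ) : Matrix (k × m) (k × m) ℂ :=
  Matrix.of fun p q => Φ (Matrix.of fun j l => X (p.1, j) (q.1, l)) p.2 q.2

/-- Complete positivity. -/
def IsCP {d m : ℕ} (Φ : Mat d → Mat m) : Prop :=
  ∀ (k : ℕ) (X : Matrix (Fin k × Fin d) (Fin k × Fin d) ℂ),
    X.PosSemidef → (idTensor Φ X).PosSemidef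

/-- Trace preservation. -/
def IsTP {d m : ℕ} (Φ : Mat d → Mat m) : Prop :=
  ∀ X, (Φ X).trace = X.trace

/-- A quantum channel: linear, completely positive, trace preserving. -/
def IsChannel {d m : ℕ} (Φ : Mat d → Mat m) : Prop :=
  IsLinearMap ℂ Φ ∧ IsCP Φ ∧ IsTP Φ

/-- The maximally entangled unit vector `|Φ⁺⟩ = (1/√d) ∑ₖ |k⟩⊗|k⟩`. -/
def phiPlusVec (d : ℕ) : Fin d × Fin d → ℂ :=
  fun p => if p.1 = p.2 then ((Real.sqrt d : ℝ) : ℂ)⁻¹ else 0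

/-- The density matrix of the maximally entangled state. -/
def phiPlus (d : ℕ) : Matrix (Fin d × Fin d) (Fin d × Fin d) ℂ :=
  proj (phiPlusVec d)

/-- Von Neumann entropy `S(ρ) = -∑ λᵢ log λᵢ` over the eigenvalues of `ρ`. -/
def entropy {n : Type*} [Fintype n] [DecidableEq n] (ρ : Matrix n n ℂ) : ℝ :=
  if h : ρ.IsHermitian then -∑ i, h.eigenvalues i * Real.log (h.eigenvalues i) else 0

/-- Quantum mutual information of a bipartite state. -/
def mutualInfo {a b : Type*} [Fintype a] [Fintype b] [DecidableEq a] [DecidableEq b]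
    (τ : Matrix (a × b) (a × b) ℂ) : ℝ :=
  entropy (trSnd τ) + entropy (trFst τ) - entropy τ

/-- Elementary tensor of three vectors on `(ℂ^d)^{⊗3}`. -/
def tp3 {d : ℕ} (x y z : Fin d → ℂ) : Fin d × Fin d × Fin d → ℂ :=
  fun p => x p.1 * y p.2.1 * z p.2.2

/-- The basis vector `|0⟩` of `ℂ^d`. -/
def e0vec (d : ℕ) : Fin d → ℂ := fun i => if (i : ℕ) = 0 then 1 else 0

/-- The unitary swapping the first and second tensor factors. -/
def S12 (d : ℕ) : Matrix (Fin d × Fin d × Fin d) (Fin d × Fin d × Fin d) ℂ :=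
  Matrix.of fun p q => if p.1 = q.2.1 ∧ p.2.1 = q.1 ∧ p.2.2 = q.2.2 then 1 else 0

/-- The unitary swapping the first and third tensor factors. -/
def S13 (d : ℕ) : Matrix (Fin d × Fin d × Fin d) (Fin d × Fin d × Fin d) ℂ :=
  Matrix.of fun p q => if p.1 = q.2.2 ∧ p.2.1 = q.2.1 ∧ p.2.2 = q.1 then 1 else 0


/-!
`H = S₁₂ + S₁₃` permutes the three vectors `ψ⊗0⊗0`, `0⊗ψ⊗0`, `0⊗0⊗ψ`, so on their span it has
the eigenvector `w` = their sum, with eigenvalue `2`, and `u = 2 ψ⊗0⊗0 - 0⊗ψ⊗0 - 0⊗0⊗ψ`, with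
eigenvalue `-1`. Since `ψ⊗0⊗0 = (w + u)/3`, the evolution `e^{-itH}` multiplies it by a single
phase exactly when `e^{-2it} = e^{it}`, i.e. when `e^{3it} = 1`.
-/

section MatrixExp

attribute [local instance] Matrix.linftyOpNormedRing Matrix.linftyOpNormedAlgebra

theorem Matrix.exp_mulVec_of_mulVec_eq_smul {𝕂 n : Type*} [RCLike 𝕂] [Fintype n] [DecidableEq n]
    {A : Matrix n n 𝕂} {c : 𝕂} {w : n → 𝕂} (h : A *ᵥ w = c • w) :
    NormedSpace.exp A *ᵥ w = NormedSpace.exp c • w := by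
  have hpow : ∀ k : ℕ, A ^ k *ᵥ w = c ^ k • w := by
    intro k
    induction k with
    | zero => simp
    | succ k ih => rw [pow_succ', ← mulVec_mulVec, ih, mulVec_smul, h, smul_smul, pow_succ]
  have hmat : HasSum (fun k : ℕ => ((k.factorial : 𝕂)⁻¹ • A ^ k) *ᵥ w) (NormedSpace.exp A *ᵥ w) :=
    (NormedSpace.exp_series_hasSum_exp' A).map (mulVec.addMonoidHomLeft w)
      (continuous_id.matrix_mulVec continuous_const)
  have hscalar : HasSum (fun k : ℕ => ((k.factorial : 𝕂)⁻¹ • c ^ k) • w)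
      (NormedSpace.exp c • w) :=
    (NormedSpace.exp_series_hasSum_exp' c).smul_const w
  refine hmat.unique ?_
  simpa only [smul_mulVec, hpow, smul_smul, smul_eq_mul] using hscalar

end MatrixExp

section SwapHamiltonian

variable {d : ℕ}

theorem S12_mulVec (f : Fin d × Fin d × Fin d → ℂ) :
    S12 d *ᵥ f = fun p => f (p.2.1, p.1, p.2.2) := by
  funext p
  simp [mulVec, dotProduct, S12, Fintype.sum_prod_type, ite_and, eq_comm]

theorem S13_mulVec (f : Fin d × Fin d × Fin d → ℂ) :
    S13 d *ᵥ f = fun p => f (p.2.2, p.2.1, p.1) := by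
  funext p
  simp [mulVec, dotProduct, S13, Fintype.sum_prod_type, ite_and, eq_comm]

theorem S12_add_S13_mulVec_tp3 (x y z : Fin d → ℂ) :
    (S12 d + S13 d) *ᵥ tp3 x y z = tp3 y x z + tp3 z y x := by
  rw [add_mulVec, S12_mulVec, S13_mulVec]
  funext p
  simp only [tp3, Pi.add_apply]
  ring

theorem S12_add_S13_mulVec_orbit_sum (x y : Fin d → ℂ) :
    (S12 d + S13 d) *ᵥ (tp3 x y y + tp3 y x y + tp3 y y x) =
      (2 : ℂ) • (tp3 x y y + tp3 y x y + tp3 y y x) := by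
  simp only [mulVec_add, S12_add_S13_mulVec_tp3]
  module

theorem S12_add_S13_mulVec_orbit_diff (x y : Fin d → ℂ) :
    (S12 d + S13 d) *ᵥ ((2 : ℂ) • tp3 x y y - tp3 y x y - tp3 y y x) =
      (-1 : ℂ) • ((2 : ℂ) • tp3 x y y - tp3 y x y - tp3 y y x) := by
  simp only [mulVec_sub, mulVec_smul, S12_add_S13_mulVec_tp3]
  module

end SwapHamiltonian

theorem stmt_17_general (d : ℕ) (t : ℝ)
    (ht : Complex.exp (3 * Complex.I * (t : ℂ)) = 1) (ψ : Fin d → ℂ) :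
    NormedSpace.exp ((-(Complex.I * (t : ℂ))) • (S12 d + S13 d)) *ᵥ
        tp3 ψ (e0vec d) (e0vec d) =
      Complex.exp (-(2 * Complex.I * (t : ℂ))) • tp3 ψ (e0vec d) (e0vec d) := by
  set e := e0vec d
  set s : ℂ := -(Complex.I * t)
  set w := tp3 ψ e e + tp3 e ψ e + tp3 e e ψ
  set u := (2 : ℂ) • tp3 ψ e e - tp3 e ψ e - tp3 e e ψ
  have hw : NormedSpace.exp (s • (S12 d + S13 d)) *ᵥ w = Complex.exp (s * 2) • w := by
    rw [Complex.exp_eq_exp_ℂ]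
    refine exp_mulVec_of_mulVec_eq_smul ?_
    rw [smul_mulVec, S12_add_S13_mulVec_orbit_sum, smul_smul]
  have hu : NormedSpace.exp (s • (S12 d + S13 d)) *ᵥ u = Complex.exp (s * -1) • u := by
    rw [Complex.exp_eq_exp_ℂ]
    refine exp_mulVec_of_mulVec_eq_smul ?_
    rw [smul_mulVec, S12_add_S13_mulVec_orbit_diff, smul_smul]
  have hphase_w : Complex.exp (s * 2) = Complex.exp (-(2 * Complex.I * t)) := by
    rw [show s * 2 = -(2 * Complex.I * t) by ring]
  have hphase_u : Complex.exp (s * -1) = Complex.exp (-(2 * Complex.I * t)) := by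
    rw [show s * -1 = -(2 * Complex.I * t) + 3 * Complex.I * t by ring, Complex.exp_add, ht,
      mul_one]
  have hdecomp : tp3 ψ e e = (3 : ℂ)⁻¹ • (w + u) := by module
  rw [hdecomp, mulVec_smul, mulVec_add, hw, hu, hphase_w, hphase_u, ← smul_add, smul_comm]

/-- At times with `e^{3it} = 1`, the simultaneous-swap evolution acts as a global phase
`e^{-2it}` on all states `ψ ⊗ |0⟩ ⊗ |0⟩`, so the procedure is not a measurement. -/
theorem stmt_17 (d : ℕ) (hd : 2 ≤ d) (t : ℝ)
    (ht : Complex.exp (3 * Complex.I * (t : ℂ)) = 1) (ψ : Fin d → ℂ) :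
    NormedSpace.exp ((-(Complex.I * (t : ℂ))) • (S12 d + S13 d)) *ᵥ
        tp3 ψ (e0vec d) (e0vec d) =
      Complex.exp (-(2 * Complex.I * (t : ℂ))) • tp3 ψ (e0vec d) (e0vec d) :=
  stmt_17_general d t ht ψ
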